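/- (Weak solutions are strong solutions — elliptic regularity step.) Let V : H → H be a bounded linear operator and f ∈ H. If u ∈ D_{s/2} satisfies ⟨A_{s/2} u, A_{s/2} v⟩ + ⟨V u, v⟩ = ⟨f, v⟩ for every v ∈ D_{s/2}, then u ∈ D_s and A_s u + V u = f. -/

import Mathlib

open scoped RealInnerProductSpace

/-- The fractional domain `D_σ = {u : Σₖ λₖ^{2σ} ⟨u,φₖ⟩² < ∞}`. -/
noncomputable def Dom {H : Type*} [NormedAddCommGroup H] [InnerProductSpace ℝ H]
    [CompleteSpace H] (φ : HilbertBasis ℕ ℝ H) (lam : ℕ → ℝ) (σ : ℝ) : Set H :=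
  {u | Summable fun k => lam k ^ (2 * σ) * ⟪u, φ k⟫ ^ 2}

/-- The spectral fractional power `A_σ u = Σₖ λₖ^σ ⟨u,φₖ⟩ φₖ`. -/
noncomputable def Aop {H : Type*} [NormedAddCommGroup H] [InnerProductSpace ℝ H]
    [CompleteSpace H] (φ : HilbertBasis ℕ ℝ H) (lam : ℕ → ℝ) (σ : ℝ) (u : H) : H :=
  ∑' k, (lam k ^ σ * ⟪u, φ k⟫) • φ k

/-!
Testing the weak equation against the basis vector `φⱼ ∈ D_{s/2}` gives
`λⱼ^s ⟨u,φⱼ⟩ = ⟨f - Vu, φⱼ⟩`. By Parseval the right-hand side is square summable, so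
`u ∈ D_s`, and the series defining `A_s u` is the Fourier expansion of `f - Vu`.
-/

lemma Real.rpow_mul_sq {x : ℝ} (hx : 0 ≤ x) (σ a : ℝ) :
    x ^ (2 * σ) * a ^ 2 = (x ^ σ * a) ^ 2 := by
  rw [mul_pow, mul_comm 2 σ, Real.rpow_mul hx, Real.rpow_two]

lemma Real.rpow_half_mul_rpow_half {x : ℝ} (hx : 0 ≤ x) (s : ℝ) :
    x ^ (s / 2) * x ^ (s / 2) = x ^ s := by
  rw [← sq, ← Real.rpow_two, ← Real.rpow_mul hx, div_mul_cancel₀ s two_ne_zero]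

namespace HilbertBasis

variable {ι H : Type*} [NormedAddCommGroup H] [InnerProductSpace ℝ H] (b : HilbertBasis ι ℝ H)

lemma summable_inner_sq (x : H) : Summable fun i => ⟪x, b i⟫ ^ 2 := by
  simpa [real_inner_comm, sq_abs] using b.orthonormal.inner_products_summable (x := x)

lemma inner_tsum_smul {c : ι → ℝ} (hc : Summable fun i => c i ^ 2) (j : ι) :
    ⟪∑' i, c i • b i, b j⟫ = c j := by
  have hc' : Memℓp c 2 := (memℓp_gen_iff (by norm_num)).2 (by simpa [sq_abs] using hc)
  rw [(b.hasSum_repr_symm ⟨c, hc'⟩).tsum_eq, real_inner_comm, ← b.repr_apply_apply,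
    LinearIsometryEquiv.apply_symm_apply]

lemma tsum_inner_smul (x : H) : ∑' i, ⟪x, b i⟫ • b i = x := by
  simpa [b.repr_apply_apply, real_inner_comm] using (b.hasSum_repr x).tsum_eq

end HilbertBasis

section FractionalPower

variable {H : Type*} [NormedAddCommGroup H] [InnerProductSpace ℝ H] [CompleteSpace H]
  (φ : HilbertBasis ℕ ℝ H) {lam : ℕ → ℝ}

lemma mem_Dom_iff (hlam : ∀ k, 0 ≤ lam k) {σ : ℝ} {u : H} :
    u ∈ Dom φ lam σ ↔ Summable fun k => (lam k ^ σ * ⟪u, φ k⟫) ^ 2 := by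
  simp only [Dom, Set.mem_ofPred_eq, Real.rpow_mul_sq (hlam _)]

lemma basis_mem_Dom (lam : ℕ → ℝ) (σ : ℝ) (j : ℕ) : φ j ∈ Dom φ lam σ := by
  refine summable_of_ne_finset_zero (s := {j}) fun k hk => ?_
  simp [φ.orthonormal.2 (Finset.notMem_singleton.1 hk).symm]

lemma Aop_basis (lam : ℕ → ℝ) (σ : ℝ) (j : ℕ) : Aop φ lam σ (φ j) = lam j ^ σ • φ j := by
  rw [Aop, tsum_eq_single j fun k hk => by simp [φ.orthonormal.2 hk.symm]]
  simp [φ.orthonormal.1 j]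

lemma inner_Aop_basis (hlam : ∀ k, 0 ≤ lam k) {σ : ℝ} {u : H} (hu : u ∈ Dom φ lam σ) (j : ℕ) :
    ⟪Aop φ lam σ u, φ j⟫ = lam j ^ σ * ⟪u, φ j⟫ :=
  φ.inner_tsum_smul ((mem_Dom_iff φ hlam).1 hu) j

lemma mem_Dom_and_Aop_eq_of_inner (hlam : ∀ k, 0 ≤ lam k) {σ : ℝ} {u g : H}
    (hg : ∀ k, ⟪g, φ k⟫ = lam k ^ σ * ⟪u, φ k⟫) : u ∈ Dom φ lam σ ∧ Aop φ lam σ u = g :=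
  ⟨(mem_Dom_iff φ hlam).2 (by simpa only [← hg] using φ.summable_inner_sq g),
    by simpa only [Aop, ← hg] using φ.tsum_inner_smul g⟩

end FractionalPower

theorem statement12_general {H : Type*} [NormedAddCommGroup H] [InnerProductSpace ℝ H]
    [CompleteSpace H] (φ : HilbertBasis ℕ ℝ H) (lam : ℕ → ℝ) (hlam : ∀ k, 0 ≤ lam k)
    (s : ℝ) (V : H →L[ℝ] H) (f : H)
    (u : H) (hu : u ∈ Dom φ lam (s / 2))
    (hweak : ∀ v ∈ Dom φ lam (s / 2),
      ⟪Aop φ lam (s / 2) u, Aop φ lam (s / 2) v⟫ + ⟪V u, v⟫ = ⟪f, v⟫) :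
    u ∈ Dom φ lam s ∧ Aop φ lam s u + V u = f := by
  have hcoeff : ∀ j, ⟪f - V u, φ j⟫ = lam j ^ s * ⟪u, φ j⟫ := by
    intro j
    have h := hweak (φ j) (basis_mem_Dom φ lam (s / 2) j)
    rw [Aop_basis, real_inner_smul_right, inner_Aop_basis φ hlam hu, ← mul_assoc,
      Real.rpow_half_mul_rpow_half (hlam j)] at h
    rw [inner_sub_left]
    linarith
  obtain ⟨hdom, hA⟩ := mem_Dom_and_Aop_eq_of_inner φ hlam hcoeff
  exact ⟨hdom, by rw [hA, sub_add_cancel]⟩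

theorem statement12 {H : Type*} [NormedAddCommGroup H] [InnerProductSpace ℝ H]
    [CompleteSpace H] (φ : HilbertBasis ℕ ℝ H) (lam : ℕ → ℝ) (hlam : ∀ k, 0 ≤ lam k)
    (s : ℝ) (hs : 0 < s) (V : H →L[ℝ] H) (f : H)
    (u : H) (hu : u ∈ Dom φ lam (s / 2))
    (hweak : ∀ v ∈ Dom φ lam (s / 2),
      ⟪Aop φ lam (s / 2) u, Aop φ lam (s / 2) v⟫ + ⟪V u, v⟫ = ⟪f, v⟫) :
    u ∈ Dom φ lam s ∧ Aop φ lam s u + V u = f :=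
  statement12_general φ lam hlam s V f u hu hweak
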